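/- For any integer d ≥ 2 let 𝒜_(d) = {a_1, …, a_d}, 𝒜_(d+1) = {a_1, …, a_{d+1}}, and let τ_d: 𝒜_(d+1)* → 𝒜_(d)* be the morphism a_i ↦ a_i a_i for 1 ≤ i ≤ d and a_{d+1} ↦ a_1 a_2 ⋯ a_d. Then τ_d is recognizable in every subshift X ⊆ 𝒜_(d+1)^ℤ that does not contain any of the periodic words a_i^{±∞}, 1 ≤ i ≤ d+1. -/

import Mathlib

open MeasureTheory Filter
open scoped ENNReal

namespace SAdicPaper

universe u v

/-- Biinfinite words over the alphabet `A`. -/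
def ZWord (A : Type u) : Type u := ℤ → A

noncomputable instance {A : Type u} : TopologicalSpace (ZWord A) :=
  @Pi.topologicalSpace ℤ (fun _ => A) (fun _ => ⊥)

instance {A : Type u} : MeasurableSpace (ZWord A) :=
  @MeasurableSpace.pi ℤ (fun _ => A) (fun _ => ⊤)

instance finAddTwoNonempty (n : ℕ) : Nonempty (Fin (n + 2)) := ⟨⟨0, by omega⟩⟩

variable {A : Type u} {B : Type v}

/-- The shift map `T`. -/
def shift (x : ZWord A) : ZWord A := fun i => x (i + 1)

/-- Shift by an arbitrary integer amount. -/
def shiftBy (m : ℤ) (x : ZWord A) : ZWord A := fun i => x (i + m)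

/-- A subshift: a non-empty, closed, shift-invariant set of biinfinite words. -/
def IsSubshift (X : Set (ZWord A)) : Prop :=
  X.Nonempty ∧ IsClosed X ∧ shift '' X = X

/-- The finite subword of `x` of length `n` starting at position `k`. -/
def subword (x : ZWord A) (k : ℤ) (n : ℕ) : List A :=
  (List.range n).map fun i => x (k + i)

/-- The language of finite factors of elements of `X`. -/
def lang (X : Set (ZWord A)) : Set (List A) :=
  { w | ∃ x ∈ X, ∃ k : ℤ, w = subword x k w.length }

/-- The subshift generated by a language. -/
def subshiftGen (L : Set (List A)) : Set (ZWord A) :=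
  { x | ∀ (k : ℤ) (n : ℕ), ∃ u ∈ L, subword x k n <:+: u }

/-- Extension of a letter map `σ : A → List B` to words: the free monoid morphism. -/
def wordMap (σ : A → List B) (w : List A) : List B := (w.map σ).flatten

/-- A morphism is non-erasing if no letter is mapped to the empty word. -/
def NonErasing (σ : A → List B) : Prop := ∀ a, σ a ≠ []

/-- The image subshift `σ(X)`. -/
def imageSubshift (σ : A → List B) (X : Set (ZWord A)) : Set (ZWord B) :=
  subshiftGen (wordMap σ '' lang X)

/-- The position at which the `σ`-image of the letter of `x` at index `n` starts
(the image of the letter at index 1 starts at index 1). -/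
noncomputable def offset (σ : A → List B) (x : ZWord A) (n : ℤ) : ℤ :=
  if 1 ≤ n then 1 + ∑ i ∈ Finset.Ico (1 : ℤ) n, ((σ (x i)).length : ℤ)
  else 1 - ∑ i ∈ Finset.Ico n (1 : ℤ), ((σ (x i)).length : ℤ)

/-- The induced map `σ^ℤ` on biinfinite words. -/
noncomputable def sigmaZ [Nonempty B] (σ : A → List B) (x : ZWord A) : ZWord B := fun j =>
  let n := Classical.epsilon fun n : ℤ => offset σ x n ≤ j ∧ j < offset σ x (n + 1)
  (σ (x n)).getD (j - offset σ x n).toNat (Classical.arbitrary B)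

/-- The cylinder `[w]`: biinfinite words `x` with `x₁ ⋯ x_{|w|} = w`. -/
def cylinder (w : List A) : Set (ZWord A) :=
  { x | ∀ i : Fin w.length, x (((i : ℕ) : ℤ) + 1) = w.get i }

/-- Shift-invariance of a measure. -/
def ShiftInvariantM (μ : Measure (ZWord A)) : Prop :=
  ∀ S : Set (ZWord A), MeasurableSet S → μ (shift ⁻¹' S) = μ S

/-- The cone `ℳ(X)` of shift-invariant finite Borel measures supported in `X`. -/
def measureCone (X : Set (ZWord A)) : Set (Measure (ZWord A)) :=
  { μ | μ Set.univ ≠ ⊤ ∧ ShiftInvariantM μ ∧ μ Xᶜ = 0 }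

/-- The subdivision alphabet `𝒜_σ`. -/
def SubAlph (σ : A → List B) : Type u := Σ a : A, Fin (σ a).length

/-- The subdivision morphism `π_σ`. -/
def subdivMap (σ : A → List B) : A → List (SubAlph σ) :=
  fun a => (List.finRange (σ a).length).map fun k => ⟨a, k⟩

/-- The letter-to-letter map `α_σ` on letters. -/
def letterMap (σ : A → List B) : SubAlph σ → B := fun p => (σ p.1).get p.2

/-- The letter-to-letter morphism `α_σ`. -/
def alphaMap (σ : A → List B) : SubAlph σ → List B := fun p => [letterMap σ p]

/-- The map `α_σ^ℤ` on biinfinite words. -/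
def alphaZ (σ : A → List B) : ZWord (SubAlph σ) → ZWord B := fun y i => letterMap σ (y i)

/-- The measure transfer map `σ^ℳ`: the push-forward under `α_σ` of the
subdivision measure `μ^{π_σ}` (realized concretely on the subdivision full shift). -/
noncomputable def transfer (σ : A → List B) (μ : Measure (ZWord A)) : Measure (ZWord B) :=
  letI := Classical.propDecidable (Nonempty (SubAlph σ))
  if h : Nonempty (SubAlph σ) then
    haveI := h
    Measure.map (alphaZ σ)
      (Measure.sum fun k : ℕ =>
        Measure.map (fun x => shift^[k] (sigmaZ (subdivMap σ) x))
          (μ.restrict { x | k < (σ (x 1)).length }))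
  else 0

/-- Recognizability of `σ` in a subshift `X`. -/
def Recognizable [Nonempty B] (σ : A → List B) (X : Set (ZWord A)) : Prop :=
  ∀ x ∈ X, ∀ x' ∈ X, ∀ k l : ℕ,
    k < (σ (x 1)).length → l < (σ (x' 1)).length →
    shift^[k] (sigmaZ σ x) = shift^[l] (sigmaZ σ x') → x = x' ∧ k = l

/-- `x` and `y` lie in the same shift-orbit. -/
def sameOrbit (x y : ZWord A) : Prop := ∃ m : ℤ, y = shiftBy m x

/-- `σ` is shift-orbit injective in `X`. -/
def ShiftOrbitInjective [Nonempty B] (σ : A → List B) (X : Set (ZWord A)) : Prop :=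
  ∀ x ∈ X, ∀ y ∈ X, (sameOrbit (sigmaZ σ x) (sigmaZ σ y) ↔ sameOrbit x y)

/-- The periodic biinfinite word `w^{±∞}`. -/
def periodicWord (w : List A) (h : w ≠ []) : ZWord A := fun i =>
  w.get ⟨(i % (w.length : ℤ)).toNat, by
    have hl : 0 < w.length := List.length_pos_iff.mpr h
    have h1 : 0 ≤ i % (w.length : ℤ) := Int.emod_nonneg i (by exact_mod_cast hl.ne')
    have h2 : i % (w.length : ℤ) < (w.length : ℤ) := Int.emod_lt_of_pos i (by exact_mod_cast hl)
    omega⟩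

/-- A word is a proper power if `w = u^m` for some `m ≥ 2`. -/
def IsProperPower (w : List A) : Prop :=
  ∃ (u : List A) (m : ℕ), 2 ≤ m ∧ w = (List.replicate m u).flatten

/-- `σ` is shift-period preserving in `X`. -/
def ShiftPeriodPreserving (σ : A → List B) (X : Set (ZWord A)) : Prop :=
  ∀ (w : List A) (h : w ≠ []), periodicWord w h ∈ X →
    (IsProperPower w ↔ IsProperPower (wordMap σ w))

/-- The incidence matrix `M(σ)` of a morphism. -/
noncomputable def incidence (σ : A → List B) : Matrix B A ℝ :=
  letI := Classical.decEq B
  Matrix.of fun b a => ((σ a).count b : ℝ)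

/-- The number `|u|_w` of occurrences of `w` as a factor of `u`. -/
noncomputable def occ (w u : List A) : ℕ :=
  letI := Classical.decEq A
  ((List.range (u.length + 1)).filter fun i => decide ((u.drop i).take w.length = w)).length

/-- A minimal subshift. -/
def IsMinimalSubshift (X : Set (ZWord A)) : Prop :=
  IsSubshift X ∧ ∀ Y, Y ⊆ X → IsSubshift Y → Y = X

/-- A shift-invariant probability measure. -/
def IsProbInvariant (μ : Measure (ZWord A)) : Prop :=
  ShiftInvariantM μ ∧ μ Set.univ = 1

/-- An ergodic shift-invariant probability measure: not a positive linear combination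
of two distinct shift-invariant probability measures. -/
def IsErgodicMeasure (μ : Measure (ZWord A)) : Prop :=
  IsProbInvariant μ ∧
    ∀ ν₁ ν₂ : Measure (ZWord A), IsProbInvariant ν₁ → IsProbInvariant ν₂ →
      ∀ c₁ c₂ : ℝ≥0∞, 0 < c₁ → 0 < c₂ → μ = c₁ • ν₁ + c₂ • ν₂ → ν₁ = ν₂

/-- Aperiodicity: no shift-periodic word in `X`. -/
def Aperiodic (X : Set (ZWord A)) : Prop :=
  ∀ x ∈ X, ∀ p : ℕ, 0 < p → shift^[p] x ≠ x

/-- Unique ergodicity of a subshift `X`. -/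
def UniquelyErgodic (X : Set (ZWord A)) : Prop :=
  ∃! μ : Measure (ZWord A), IsErgodicMeasure μ ∧ μ ∈ measureCone X

/-- The complexity function `p_X(n)`. -/
noncomputable def complexity (X : Set (ZWord A)) (n : ℕ) : ℕ :=
  Set.ncard { w : List A | w ∈ lang X ∧ w.length = n }

/-- The letter frequency vector of a measure. -/
noncomputable def freqMap (μ : Measure (ZWord A)) : A → ℝ := fun a => (μ (cylinder [a])).toReal

/-- The letter frequency cone `𝒞(X)`. -/
def letterFreqCone (X : Set (ZWord A)) : Set (A → ℝ) := freqMap '' measureCone X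

/-- A primitive substitution: some power of the incidence matrix is positive. -/
def Primitive (τ : A → List A) : Prop :=
  ∃ p : ℕ, 0 < p ∧ ∀ a b : A, b ∈ (wordMap τ)^[p] [a]

/-- The substitutive subshift of a substitution. -/
def substitutiveSubshift (τ : A → List A) : Set (ZWord A) :=
  { x | ∀ (k : ℤ) (m : ℕ), ∃ (p : ℕ) (a : A), 1 ≤ p ∧ subword x k m <:+: (wordMap τ)^[p] [a] }

section Directive

variable {𝒜 : ℕ → Type u}

/-- The telescoped morphism `σ_{[0,n)}`, on letters. -/
def teleW (σ : ∀ n, 𝒜 (n+1) → List (𝒜 n)) : (n : ℕ) → 𝒜 n → List (𝒜 0)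
  | 0, a => [a]
  | n+1, a => wordMap (teleW σ n) (σ n a)

/-- The telescoped morphism `σ_{[k,k+m)}`, on letters. -/
def teleWFrom (σ : ∀ n, 𝒜 (n+1) → List (𝒜 n)) (k : ℕ) : (m : ℕ) → 𝒜 (k + m) → List (𝒜 k)
  | 0, a => [a]
  | m+1, a => wordMap (teleWFrom σ k m) (σ (k + m) a)

/-- An everywhere growing directive sequence. -/
def EverywhereGrowing (σ : ∀ n, 𝒜 (n+1) → List (𝒜 n)) : Prop :=
  ∀ N : ℕ, ∃ n₀ : ℕ, ∀ n, n₀ ≤ n → ∀ a : 𝒜 n, N ≤ (teleW σ n a).length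

/-- The subshift generated by a directive sequence. -/
def genSubshift (σ : ∀ n, 𝒜 (n+1) → List (𝒜 n)) : Set (ZWord (𝒜 0)) :=
  { x | ∀ (k : ℤ) (m : ℕ), ∃ n : ℕ, 1 ≤ n ∧ ∃ a : 𝒜 n, subword x k m <:+: teleW σ n a }

/-- The level-`k` subshift of a directive sequence. -/
def levelSubshift (σ : ∀ n, 𝒜 (n+1) → List (𝒜 n)) (k : ℕ) : Set (ZWord (𝒜 k)) :=
  genSubshift (𝒜 := fun n => 𝒜 (k + n)) (fun n => σ (k + n))

/-- A vector tower on a directive sequence. -/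
def IsVectorTower [∀ n, Fintype (𝒜 n)] (σ : ∀ n, 𝒜 (n+1) → List (𝒜 n))
    (v : ∀ n, 𝒜 n → ℝ) : Prop :=
  (∀ n a, 0 ≤ v n a) ∧ ∀ n, v n = (incidence (σ n)).mulVec (v (n+1))

/-- `μ = 𝔪(v)` is the invariant measure on the generated subshift obtained by
evaluating the vector tower `v`. -/
def IsTowerMeasure [∀ n, Fintype (𝒜 n)] (σ : ∀ n, 𝒜 (n+1) → List (𝒜 n))
    (v : ∀ n, 𝒜 n → ℝ) (μ : Measure (ZWord (𝒜 0))) : Prop :=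
  μ ∈ measureCone (genSubshift σ) ∧
    ∀ w : List (𝒜 0),
      Tendsto (fun n => ∑ a : 𝒜 n, v n a * (occ w (teleW σ n a) : ℝ)) atTop
        (nhds ((μ (cylinder w)).toReal))

/-- A measure tower on a directive sequence. -/
def IsMeasureTower (σ : ∀ n, 𝒜 (n+1) → List (𝒜 n))
    (μs : ∀ n, Measure (ZWord (𝒜 n))) : Prop :=
  (∀ n, μs n ∈ measureCone (Set.univ : Set (ZWord (𝒜 n)))) ∧
    ∀ n, μs n = transfer (σ n) (μs (n+1))

/-- The intermediate letter frequency cone `𝒞_n`. -/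
def freqConeAt [∀ n, Fintype (𝒜 n)] (σ : ∀ n, 𝒜 (n+1) → List (𝒜 n)) (n : ℕ) :
    Set (𝒜 n → ℝ) :=
  ⋂ m : ℕ, (incidence (teleWFrom σ n (m+1))).mulVec '' { v | ∀ a, 0 ≤ v a }

/-- The dimension `c_n` of the intermediate letter frequency cone. -/
noncomputable def dimC [∀ n, Fintype (𝒜 n)] (σ : ∀ n, 𝒜 (n+1) → List (𝒜 n)) (n : ℕ) : ℕ :=
  Module.finrank ℝ (Submodule.span ℝ (freqConeAt σ n))

end Directive

section Prolong

variable {B : Type u} {𝒜 : ℕ → Type u}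

/-- Alphabets of the prolonged directive sequence `⃖σ^τ`. -/
def prolongA (B : Type u) (𝒜 : ℕ → Type u) : ℕ → Type u
  | 0 => B
  | n+1 => 𝒜 n

instance prolongAFintype [Fintype B] [∀ n, Fintype (𝒜 n)] :
    ∀ n, Fintype (prolongA B 𝒜 n)
  | 0 => inferInstanceAs (Fintype B)
  | n+1 => inferInstanceAs (Fintype (𝒜 n))

/-- The prolonged directive sequence `⃖σ^τ`. -/
def prolongSeq (τ : 𝒜 0 → List B) (σ : ∀ n, 𝒜 (n+1) → List (𝒜 n)) :
    ∀ n, prolongA B 𝒜 (n+1) → List (prolongA B 𝒜 n)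
  | 0 => τ
  | n+1 => σ n

/-- The prolonged vector tower `⃖v^τ`. -/
noncomputable def prolongTower [Fintype (𝒜 0)] (τ : 𝒜 0 → List B) (v : ∀ n, 𝒜 n → ℝ) :
    ∀ n, prolongA B 𝒜 n → ℝ
  | 0 => (incidence τ).mulVec (v 0)
  | n+1 => v n

end Prolong

/-- The morphism `τ_d : 𝒜_{d+1}* → 𝒜_d*`, `a_i ↦ a_i a_i` (i ≤ d), `a_{d+1} ↦ a_1 ⋯ a_d`. -/
def tauMap (d : ℕ) : Fin (d+1) → List (Fin d) := fun i =>
  if h : (i : ℕ) < d then [⟨i, h⟩, ⟨i, h⟩] else List.ofFn (fun j : Fin d => j)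

/-- Sizes of the alphabets of the alternating sequence `σ₂ ∘ τ₂ ∘ σ₃ ∘ τ₃ ∘ ⋯`. -/
def sz (n : ℕ) : ℕ := n / 2 + 2

/-- The alternating directive sequence `σ₂ ∘ τ₂ ∘ σ₃ ∘ τ₃ ∘ ⋯`. -/
def altSeq (σfam : ∀ d, Fin d → List (Fin d)) (n : ℕ) : Fin (sz (n+1)) → List (Fin (sz n)) :=
  fun a =>
    if h : n % 2 = 0 then
      σfam (sz n) (Fin.cast (by simp only [sz]; omega) a)
    else
      tauMap (sz n) (Fin.cast (by simp only [sz]; omega) a)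

/-!
Inside a block the letters of `τ_d` never decrease (`a_i a_i` and `a_1 ⋯ a_d`), so every descent
of `y = T^k τ_d(x)` marks a block boundary. A left tail of `y` without descents would be
eventually constant, hence so would `x`, and `X` would contain some `a_i^{±∞}`; so descents, i.e.
boundaries common to all parsings of `y`, occur arbitrarily far to the left. The images of the
letters form a prefix code, so two parsings agree from a common boundary onwards, which forces
`x = x'` and `k = l`.
-/

theorem _root_.StrictMono.monotone_sub_id {f : ℤ → ℤ} (hf : StrictMono f) :
    Monotone fun n => f n - n :=
  monotone_int_of_le_succ fun n => by have := hf (lt_add_one n); omega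

theorem _root_.StrictMono.exists_apply_le_lt {f : ℤ → ℤ} (hf : StrictMono f) (j : ℤ) :
    ∃ a, f a ≤ j ∧ j < f (a + 1) := by
  have hbdd : ∃ b, ∀ a, j < f a → b ≤ a := ⟨min 0 (j - f 0), fun a ha => by
    by_contra! hab
    have : f a - a ≤ f 0 - 0 := hf.monotone_sub_id (show a ≤ 0 by omega)
    omega⟩
  have hex : ∃ a, j < f a := ⟨max 0 (j - f 0 + 1), by
    have : f 0 - 0 ≤ f _ - _ := hf.monotone_sub_id (show 0 ≤ max 0 (j - f 0 + 1) by omega)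
    omega⟩
  obtain ⟨a, ha, hmin⟩ := Int.exists_least_of_bdd hbdd hex
  refine ⟨a - 1, ?_, by simpa using ha⟩
  by_contra! h
  have := hmin (a - 1) h
  omega

theorem _root_.StrictMono.eq_of_apply_le_lt {f : ℤ → ℤ} (hf : StrictMono f) {a b j : ℤ}
    (ha : f a ≤ j ∧ j < f (a + 1)) (hb : f b ≤ j ∧ j < f (b + 1)) : a = b := by
  by_contra hab
  rcases lt_or_gt_of_ne hab with h | h
  · have := hf.monotone (show a + 1 ≤ b by omega); omega
  · have := hf.monotone (show b + 1 ≤ a by omega); omega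

theorem exists_forall_le_eq_of_le_succ {α : Type*} [LinearOrder α] [WellFoundedLT α]
    {y : ℤ → α} {P : ℤ} (h : ∀ p < P, y p ≤ y (p + 1)) : ∃ Q, ∀ p ≤ Q, y p = y Q := by
  set g : ℕ → α := fun m => y (P - m)
  have hg : Antitone g := antitone_nat_of_succ_le fun m => by
    simpa [g, sub_add_eq_sub_sub] using h (P - m - 1) (by omega)
  refine ⟨P - Function.argmin g, fun p hp => ?_⟩
  have hm : Function.argmin g ≤ (P - p).toNat := by omega
  have hp' : y p = g (P - p).toNat := by simp only [g]; congr; omega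
  rw [hp']
  exact le_antisymm (hg hm) (Function.argmin_le g _)

theorem shift_iterate_apply (k : ℕ) (y : ZWord A) (j : ℤ) : shift^[k] y j = y (j + k) := by
  induction k generalizing j with
  | zero => simp
  | succ k ih =>
    rw [Function.iterate_succ_apply']
    change shift^[k] y (j + 1) = _
    rw [ih, Nat.cast_succ, add_right_comm, add_assoc]

theorem IsSubshift.shiftBy_neg_mem {X : Set (ZWord A)} (hX : IsSubshift X) {x : ZWord A}
    (hx : x ∈ X) (m : ℕ) : shiftBy (-m) x ∈ X := by
  induction m with
  | zero =>
    change (fun i => x (i + -((0 : ℕ) : ℤ))) ∈ X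
    simp only [Nat.cast_zero, neg_zero, add_zero]
    exact hx
  | succ m ih =>
    rw [← hX.2.2] at ih
    obtain ⟨w, hw, hsw⟩ := ih
    convert hw using 1
    funext i
    have := congrFun hsw (i - 1)
    change w (i - 1 + 1) = x (i - 1 + -m) at this
    change x (i + -(m + 1 : ℕ)) = w i
    rw [sub_add_cancel] at this
    rw [this]
    push_cast
    ring_nf

theorem IsSubshift.const_mem_of_forall_le_eq {X : Set (ZWord A)} (hX : IsSubshift X)
    {x : ZWord A} (hx : x ∈ X) {a : A} {N : ℤ} (hxa : ∀ n ≤ N, x n = a) : (fun _ => a : ZWord A) ∈ X := by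
  let _ : TopologicalSpace A := ⊥
  have hlim : Tendsto (fun m : ℕ => shiftBy (-m) x) atTop (nhds fun _ => a) := by
    refine tendsto_pi_nhds.mpr fun i => tendsto_const_nhds.congr' ?_
    filter_upwards [eventually_ge_atTop (i - N).toNat] with m hm
    exact (hxa _ (by omega)).symm
  exact hX.2.1.mem_of_tendsto hlim (Eventually.of_forall (hX.shiftBy_neg_mem hx))

theorem length_subword (y : ZWord A) (p : ℤ) (n : ℕ) : (subword y p n).length = n := by
  simp [subword]

theorem getElem_subword (y : ZWord A) (p : ℤ) (n : ℕ) {i : ℕ}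
    (hi : i < (subword y p n).length) : (subword y p n)[i] = y (p + i) := by
  simp [subword, ← List.map_eq_flatMap]

theorem subword_prefix_of_le (y : ZWord A) (p : ℤ) {m n : ℕ} (hmn : m ≤ n) :
    subword y p m <+: subword y p n := by
  have : (subword y p n).take m = subword y p m :=
    List.ext_getElem (by simp [length_subword, hmn]) fun i _ _ => by simp [getElem_subword]
  exact this ▸ List.take_prefix m _

section Offset

variable {σ : A → List B}

theorem offset_one (x : ZWord A) : offset σ x 1 = 1 := by
  simp [offset]

theorem offset_succ (x : ZWord A) (n : ℤ) :
    offset σ x (n + 1) = offset σ x n + (σ (x n)).length := by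
  rcases le_or_gt 1 n with h | h
  · rw [offset, offset, if_pos h, if_pos (by omega)]
    have : Finset.Ico (1 : ℤ) (n + 1) = insert n (Finset.Ico 1 n) := by
      ext m; simp only [Finset.mem_Ico, Finset.mem_insert]; omega
    rw [this, Finset.sum_insert (by simp)]
    ring
  rcases eq_or_lt_of_le (show n ≤ 0 by omega) with rfl | h0
  · rw [zero_add, offset_one, offset, if_neg (by omega), show Finset.Ico (0 : ℤ) 1 = {0} from rfl]
    simp
  · rw [offset, offset, if_neg (by omega), if_neg (by omega)]
    have : Finset.Ico n (1 : ℤ) = insert n (Finset.Ico (n + 1) 1) := by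
      ext m; simp only [Finset.mem_Ico, Finset.mem_insert]; omega
    rw [this, Finset.sum_insert (by simp)]
    ring

theorem offset_strictMono (hσ : NonErasing σ) (x : ZWord A) : StrictMono (offset σ x) :=
  strictMono_int_of_lt_succ fun n => by
    rw [offset_succ]
    have := List.length_pos_iff.mpr (hσ (x n))
    omega

theorem offset_le_self (hσ : NonErasing σ) (x : ZWord A) {n : ℤ} (hn : n ≤ 1) :
    offset σ x n ≤ n := by
  have : offset σ x n - n ≤ offset σ x 1 - 1 := (offset_strictMono hσ x).monotone_sub_id hn
  rw [offset_one] at this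
  omega

theorem sigmaZ_offset_add [Nonempty B] (hσ : NonErasing σ) (x : ZWord A) (n : ℤ) {t : ℕ}
    (ht : t < (σ (x n)).length) : sigmaZ σ x (offset σ x n + t) = (σ (x n))[t] := by
  have hblock : offset σ x n ≤ offset σ x n + t ∧ offset σ x n + t < offset σ x (n + 1) := by
    rw [offset_succ]; omega
  have hspec := Classical.epsilon_spec (p := fun m => offset σ x m ≤ offset σ x n + t ∧
      offset σ x n + t < offset σ x (m + 1)) ⟨n, hblock⟩
  have hε := (offset_strictMono hσ x).eq_of_apply_le_lt hspec hblock
  simp only [sigmaZ, hε, add_sub_cancel_left, Int.toNat_natCast, List.getD_eq_getElem _ _ ht]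

end Offset

/-- `y = T^c σ^ℤ(x)`, read block by block: `σ (x n)` occurs in `y` at position
`offset σ x n - c`. -/
def IsRepresentation (σ : A → List B) (y : ZWord B) (c : ℤ) (x : ZWord A) : Prop :=
  ∀ n, subword y (offset σ x n - c) (σ (x n)).length = σ (x n)

def IsPrefixCode (σ : A → List B) : Prop :=
  ∀ a b, σ a <+: σ b → a = b

section Representation

variable {σ : A → List B} {y : ZWord B} {c c' : ℤ} {x x' : ZWord A}

theorem isRepresentation_shift_sigmaZ [Nonempty B] (hσ : NonErasing σ) (x : ZWord A) (k : ℕ) :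
    IsRepresentation σ (shift^[k] (sigmaZ σ x)) k x := by
  intro n
  refine List.ext_getElem (length_subword ..) fun t _ ht => ?_
  rw [getElem_subword, shift_iterate_apply, ← sigmaZ_offset_add hσ x n ht]
  congr 1
  ring

theorem IsRepresentation.apply (h : IsRepresentation σ y c x) (n : ℤ) {t : ℕ}
    (ht : t < (σ (x n)).length) : y (offset σ x n - c + t) = (σ (x n))[t] := by
  rw [← getElem_subword y _ _ (by rwa [length_subword])]
  exact List.getElem_of_eq (h n) _

theorem IsRepresentation.exists_offset_eq_of_not_rel (hσ : NonErasing σ) {R : B → B → Prop}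
    (hR : ∀ a, (σ a).IsChain R) (h : IsRepresentation σ y c x) {p : ℤ}
    (hp : ¬ R (y p) (y (p + 1))) : ∃ n, offset σ x n - c = p + 1 := by
  obtain ⟨n, hle, hlt⟩ := (offset_strictMono hσ x).exists_apply_le_lt (p + c)
  refine ⟨n + 1, ?_⟩
  by_contra hne
  rw [offset_succ] at hlt hne
  set t := (p + c - offset σ x n).toNat
  have ht : t + 1 < (σ (x n)).length := by omega
  have h0 := h.apply n (t := t) (by omega)
  have h1 := h.apply n ht
  rw [show offset σ x n - c + t = p by omega] at h0
  rw [show offset σ x n - c + (t + 1 : ℕ) = p + 1 by omega] at h1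
  exact hp (h0 ▸ h1 ▸ (hR (x n)).getElem t ht)

theorem IsPrefixCode.eq_of_offset_sub_eq (hσ : IsPrefixCode σ) (h : IsRepresentation σ y c x)
    (h' : IsRepresentation σ y c' x') {n n' : ℤ}
    (hcut : offset σ x n - c = offset σ x' n' - c') : x n = x' n' := by
  have hu := h n
  have hv := h' n'
  rw [← hcut] at hv
  rcases le_total (σ (x n)).length (σ (x' n')).length with hle | hle
  · have := subword_prefix_of_le y (offset σ x n - c) hle
    rw [hu, hv] at this
    exact hσ _ _ this
  · have := subword_prefix_of_le y (offset σ x n - c) hle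
    rw [hu, hv] at this
    exact (hσ _ _ this).symm

theorem IsPrefixCode.offset_sub_eq_of_le (hσ : IsPrefixCode σ) (h : IsRepresentation σ y c x)
    (h' : IsRepresentation σ y c' x') {n n' : ℤ}
    (hcut : offset σ x n - c = offset σ x' n' - c') {m : ℤ} (hm : n ≤ m) :
    offset σ x m - c = offset σ x' (m + (n' - n)) - c' := by
  induction m, hm using Int.leInduction with
  | base => rw [hcut]; congr; ring
  | succ m _ ih =>
    rw [offset_succ, show m + 1 + (n' - n) = m + (n' - n) + 1 by ring, offset_succ,
      hσ.eq_of_offset_sub_eq h h' ih]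
    omega

/-- `hk` and `hl` put position `1` in the block of index `1` of both parsings; since all cuts to
the right of the common one agree, these blocks coincide, and so do the shifts `k` and `l`. -/
theorem IsPrefixCode.eq_of_common_cut (hσ : IsPrefixCode σ) (hne : NonErasing σ) {k l : ℕ}
    (h : IsRepresentation σ y k x) (h' : IsRepresentation σ y l x')
    (hk : k < (σ (x 1)).length) (hl : l < (σ (x' 1)).length) {n n' : ℤ}
    (hcut : offset σ x n - k = offset σ x' n' - l) (hn : n ≤ 1) :
    k = l ∧ ∀ j, n ≤ j → x j = x' j := by
  have hagree := fun m (hm : n ≤ m) => hσ.offset_sub_eq_of_le h h' hcut hm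
  have hblock : ∀ {z : ZWord A} {c : ℕ}, c < (σ (z 1)).length →
      offset σ z 1 - c ≤ 1 ∧ 1 < offset σ z (1 + 1) - c := fun hc => by
    rw [offset_succ, offset_one]; omega
  have hmono' : StrictMono fun m => offset σ x' m - l := fun _ _ hab =>
    sub_lt_sub_right (offset_strictMono hne x' hab) _
  have hshift : 1 + (n' - n) = 1 := hmono'.eq_of_apply_le_lt
    (by rw [← hagree 1 hn, show 1 + (n' - n) + 1 = 1 + 1 + (n' - n) by ring,
      ← hagree (1 + 1) (by omega)]; exact hblock hk)
    (hblock hl)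
  refine ⟨?_, fun j hj => ?_⟩
  · have := hagree 1 hn
    rw [hshift, offset_one, offset_one] at this
    omega
  · have := hσ.eq_of_offset_sub_eq h h' (hagree j hj)
    rwa [show j + (n' - n) = j by omega] at this

end Representation

section TauMap

variable {d : ℕ}

theorem tauMap_of_lt {i : Fin (d + 1)} (hi : (i : ℕ) < d) :
    tauMap d i = [⟨i, hi⟩, ⟨i, hi⟩] := by
  simp [tauMap, hi]

theorem tauMap_of_not_lt {i : Fin (d + 1)} (hi : ¬(i : ℕ) < d) :
    tauMap d i = List.ofFn fun j : Fin d => j := by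
  simp [tauMap, hi]

theorem tauMap_nonErasing (hd : 1 ≤ d) : NonErasing (tauMap d) := fun i => by
  by_cases hi : (i : ℕ) < d
  · simp [tauMap_of_lt hi]
  · simp [tauMap_of_not_lt hi]; omega

theorem tauMap_isChain (i : Fin (d + 1)) : (tauMap d i).IsChain (· ≤ ·) := by
  by_cases hi : (i : ℕ) < d
  · simp [tauMap_of_lt hi]
  · simp only [tauMap_of_not_lt hi, List.isChain_ofFn, Fin.mk_le_mk]
    omega

theorem tauMap_isPrefixCode (hd : 2 ≤ d) : IsPrefixCode (tauMap d) := by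
  have hlen : ∀ i, 2 ≤ (tauMap d i).length := fun i => by
    by_cases hi : (i : ℕ) < d
    · simp [tauMap_of_lt hi]
    · simpa [tauMap_of_not_lt hi] using hd
  intro i j h
  rw [Fin.ext_iff]
  have := i.isLt
  have := j.isLt
  have h0 := congrArg Fin.val (h.getElem (i := 0) (by grind))
  have h1 := congrArg Fin.val (h.getElem (i := 1) (by grind))
  by_cases hi : (i : ℕ) < d <;> by_cases hj : (j : ℕ) < d <;>
    simp only [tauMap_of_lt, tauMap_of_not_lt, hi, hj, not_false_eq_true, List.getElem_cons_zero,
      List.getElem_cons_succ, List.getElem_ofFn] at h0 h1 <;> omega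

theorem eq_castSucc_of_forall_mem_tauMap (hd : 2 ≤ d) {i : Fin (d + 1)} {a : Fin d}
    (h : ∀ b ∈ tauMap d i, b = a) : i = a.castSucc := by
  by_cases hi : (i : ℕ) < d
  · rw [tauMap_of_lt hi] at h
    simp [← h _ List.mem_cons_self]
  · rw [tauMap_of_not_lt hi] at h
    have h0 := h ⟨0, by omega⟩ (by simp)
    have h1 := h ⟨1, by omega⟩ (by simp)
    exact absurd (h0.trans h1.symm) (by simp [Fin.ext_iff])

end TauMap

section Descent

variable {d : ℕ} {X : Set (ZWord (Fin (d + 1)))} {y : ZWord (Fin d)} {c : ℤ}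
  {x : ZWord (Fin (d + 1))}

theorem IsRepresentation.tauMap_eq_castSucc_of_forall_le_eq (hd : 2 ≤ d)
    (h : IsRepresentation (tauMap d) y c x) {a : Fin d} {Q : ℤ} (hy : ∀ p ≤ Q, y p = a) :
    ∀ n ≤ min 0 (Q + c - 1), x n = a.castSucc := by
  intro n hn
  refine eq_castSucc_of_forall_mem_tauMap hd fun b hb => ?_
  obtain ⟨t, ht, rfl⟩ := List.getElem_of_mem hb
  rw [← h.apply n ht]
  have := offset_le_self (tauMap_nonErasing (by omega)) x (show n + 1 ≤ 1 by omega)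
  rw [offset_succ] at this
  exact hy _ (by omega)

theorem IsRepresentation.exists_tauMap_descent (hd : 2 ≤ d) (hX : IsSubshift X)
    (hper : ∀ a : Fin (d + 1), (fun _ => a : ZWord (Fin (d + 1))) ∉ X) (hx : x ∈ X)
    (h : IsRepresentation (tauMap d) y c x) (P : ℤ) : ∃ p < P, ¬y p ≤ y (p + 1) := by
  by_contra! hmono
  obtain ⟨Q, hQ⟩ := exists_forall_le_eq_of_le_succ hmono
  exact hper _ (hX.const_mem_of_forall_le_eq hx (h.tauMap_eq_castSucc_of_forall_le_eq hd hQ))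

end Descent

/-- For `d ≥ 2`, the morphism `τ_d : 𝒜_(d+1)* → 𝒜_(d)*` with
`a_i ↦ a_i a_i` (1 ≤ i ≤ d) and `a_{d+1} ↦ a_1 a_2 ⋯ a_d` is recognizable in every
subshift `X ⊆ 𝒜_(d+1)^ℤ` not containing any of the periodic words `a_i^{±∞}`. -/
theorem tauMap_recognizable (d : ℕ) (hd : 2 ≤ d)
    (X : Set (ZWord (Fin (d+1)))) (hX : IsSubshift X)
    (hper : ∀ a : Fin (d+1), ((fun _ => a) : ZWord (Fin (d+1))) ∉ X) :
    @Recognizable (Fin (d+1)) (Fin d) ⟨⟨0, by omega⟩⟩ (tauMap d) X := by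
  have : Nonempty (Fin d) := ⟨⟨0, by omega⟩⟩
  intro x hx x' hx' k l hk hl hxy
  have hne := tauMap_nonErasing (d := d) (by omega)
  have hrep := isRepresentation_shift_sigmaZ hne x k
  have hrep' : IsRepresentation (tauMap d) (shift^[k] (sigmaZ (tauMap d) x)) l x' :=
    hxy ▸ isRepresentation_shift_sigmaZ hne x' l
  have key : ∀ j, k = l ∧ x j = x' j := fun j => by
    obtain ⟨p, hp, hdesc⟩ :=
      hrep.exists_tauMap_descent hd hX hper hx (offset (tauMap d) x (min j 1) - k)
    obtain ⟨n, hn⟩ := hrep.exists_offset_eq_of_not_rel hne tauMap_isChain hdesc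
    obtain ⟨n', hn'⟩ := hrep'.exists_offset_eq_of_not_rel hne tauMap_isChain hdesc
    have hnj : n ≤ min j 1 := (offset_strictMono hne x).le_iff_le.mp (by omega)
    obtain ⟨hkl, hagree⟩ := (tauMap_isPrefixCode hd).eq_of_common_cut hne hrep hrep' hk hl
      (hn.trans hn'.symm) (by omega)
    exact ⟨hkl, hagree j (by omega)⟩
  exact ⟨funext fun j => (key j).2, (key 0).1⟩

end SAdicPaper
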